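/- arXiv:1905.12987 — 5 statements merged into one kernel-verified Lean document; each statement's English description precedes it below -/
import Mathlib

section
/- Let T = T[1..n] be a string over a totally ordered alphabet whose last symbol T[n] occurs only at position n and is strictly smaller than every other symbol of T. For every i with 1 ≤ i < n and every ℓ with 1 ≤ ℓ ≤ n − i, the factor T[i, i+ℓ−1] is the longest Lyndon factor of T starting at position i if and only if T_i < T_{i+k} for all k with 1 ≤ k < ℓ, and T_i > T_{i+ℓ} (where for ℓ = n − i the condition T_i > T_{i+ℓ} reads T_i > T_n). -/
variable {α : Type*}

/-- A string is primitive if it is not a repetition `S^k` with `k > 1`. -/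
def IsPrimitive (T : List α) : Prop :=
  ¬ ∃ (S : List α) (k : ℕ), 1 < k ∧ T = (List.replicate k S).flatten

/-- A string is a Lyndon word if it is primitive and lexicographically strictly
smaller than each of its nontrivial rotations. -/
def IsLyndon [LinearOrder α] (T : List α) : Prop :=
  IsPrimitive T ∧ ∀ i, 0 < i → i < T.length → T < T.rotate i

/-- `lyndonArray T i` (positions are 1-based) is the length of the longest Lyndon
factor of `T` starting at position `i`. -/
noncomputable def lyndonArray [LinearOrder α] (T : List α) (i : ℕ) : ℕ :=
  sSup {ℓ | ℓ ≤ T.length - (i - 1) ∧ IsLyndon ((T.drop (i - 1)).take ℓ)}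

/-- The last symbol of `T` is strictly smaller than the symbol at every other
position (in particular it occurs only at the last position). -/
def Sentinel [LinearOrder α] (T : List α) : Prop :=
  ∀ (i : ℕ) (h : i + 1 < T.length), T[T.length - 1]'(by omega) < T[i]'(by omega)

/-- The suffix `T_i` (1-based) is L-type if `i < n` and `T_i > T_{i+1}`. -/
def LType [LinearOrder α] (T : List α) (i : ℕ) : Prop :=
  i < T.length ∧ T.drop i < T.drop (i - 1)

/-- The suffix `T_i` (1-based) is S-type if `T_i < T_{i+1}`, or `i = n`. -/
def SType [LinearOrder α] (T : List α) (i : ℕ) : Prop :=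
  i = T.length ∨ T.drop (i - 1) < T.drop i

/-- Position `i` (1-based, `2 ≤ i ≤ n`) is LMS-type if `T_i` is S-type and
`T_{i-1}` is L-type. -/
def LMSType [LinearOrder α] (T : List α) (i : ℕ) : Prop :=
  2 ≤ i ∧ i ≤ T.length ∧ SType T i ∧ LType T (i - 1)

section Helpers
variable [LinearOrder α]

/-- `x` is smaller than `y` with a strict difference at position `j`. -/
def LtAt (x y : List α) : Prop :=
  ∃ j, ∃ (hx : j < x.length) (hy : j < y.length),
    (∀ t (ht : t < j), x[t]'(by omega) = y[t]'(by omega)) ∧ x[j] < y[j]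

theorem prefix_le {x y : List α} (h : x <+: y) : x ≤ y := by
  obtain ⟨t, rfl⟩ := h
  rcases t with _ | ⟨a, t⟩
  · simp
  · exact le_of_lt (by simpa using List.Lex.append_left (· < ·) (List.nil_lt_cons a t) x)

theorem append_lt_append_iff (s x y : List α) : s ++ x < s ++ y ↔ x < y := by
  induction s with
  | nil => simp
  | cons a s ih =>
    constructor
    · intro h
      rcases (List.lex_cons_iff).1 h with h'
      exact ih.1 h'
    · intro h
      exact List.Lex.cons (ih.2 h)

theorem ltAt_lt {x y : List α} (h : LtAt x y) : x < y := by
  obtain ⟨j, hx, hy, heq, hlt⟩ := h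
  have hxdecomp : x = x.take j ++ x[j] :: x.drop (j+1) := by
    rw [← List.drop_eq_getElem_cons hx, List.take_append_drop]
  have hydecomp : y = y.take j ++ y[j] :: y.drop (j+1) := by
    rw [← List.drop_eq_getElem_cons hy, List.take_append_drop]
  have htake : x.take j = y.take j := by
    apply List.ext_getElem (by simp [List.length_take]; omega)
    intro t h1 h2
    simp only [List.getElem_take]
    exact heq t (by simp at h1; omega)
  rw [hxdecomp, hydecomp, ← htake]
  exact List.Lex.append_left _ (List.Lex.rel hlt) _

theorem lt_cases {x y : List α} (h : x < y) : x <+: y ∨ LtAt x y := by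
  have h' : List.Lex (· < ·) x y := h
  induction h' with
  | nil => exact Or.inl (List.nil_prefix)
  | @rel a l₁ b l₂ hab =>
    refine Or.inr ⟨0, by simp, by simp, by omega, by simpa using hab⟩
  | @cons a l₁ l₂ hsub ih =>
    rcases ih hsub with hp | ⟨j, hx, hy, heq, hlt⟩
    · exact Or.inl (List.cons_prefix_cons.mpr ⟨rfl, hp⟩)
    · refine Or.inr ⟨j+1, by simpa using hx, by simpa using hy, ?_, by simpa using hlt⟩
      intro t ht
      cases t with
      | zero => simp
      | succ t => simpa using heq t (by omega)

/-- Suffix starting at `a` is less than suffix at `b`, via first strict difference. -/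
def SufLt (T : List α) (a b : ℕ) : Prop :=
  ∃ j, ∃ (ha : a + j < T.length) (hb : b + j < T.length),
    (∀ t (ht : t < j), T[a+t]'(by omega) = T[b+t]'(by omega)) ∧ T[a+j] < T[b+j]

theorem sufLt_ltAt {T : List α} {a b : ℕ} (h : SufLt T a b) :
    LtAt (T.drop a) (T.drop b) := by
  obtain ⟨j, ha, hb, heq, hlt⟩ := h
  refine ⟨j, by simp; omega, by simp; omega, ?_, by simpa using hlt⟩
  intro t ht
  simpa using heq t ht

theorem sufLt_lt {T : List α} {a b : ℕ} (h : SufLt T a b) : T.drop a < T.drop b :=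
  ltAt_lt (sufLt_ltAt h)

theorem suffix_not_prefix {T : List α} (hsent : Sentinel T) {a b : ℕ}
    (hab : a ≠ b) (ha : a < T.length) (hb : b < T.length) :
    ¬ (T.drop a <+: T.drop b) := by
  intro hp
  rcases Nat.lt_or_ge a b with h | h
  · have := hp.length_le
    simp at this
    omega
  · have hab' : b < a := by omega
    -- drop a is shorter; its last element is the sentinel, appearing inside drop b
    have hlen : T.length - a - 1 < (T.drop a).length := by simp; omega
    have h1 : (T.drop a)[T.length - a - 1] = (T.drop b)[T.length - a - 1]'(by simp; omega) :=
      hp.getElem hlen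
    have h2 : (T.drop a)[T.length - a - 1]'hlen = T[T.length - 1]'(by omega) := by
      rw [List.getElem_drop]; congr 1; omega
    have h3 : (T.drop b)[T.length - a - 1]'(by simp; omega) = T[b + (T.length - a - 1)]'(by omega) := by
      rw [List.getElem_drop]
    have h4 := hsent (b + (T.length - a - 1)) (by omega)
    rw [h1, h3] at h2
    exact absurd h2 (ne_of_gt h4)

theorem suffix_trichotomy {T : List α} (hsent : Sentinel T) {a b : ℕ}
    (hab : a ≠ b) (ha : a < T.length) (hb : b < T.length) :
    SufLt T a b ∨ SufLt T b a := by
  have hne : T.drop a ≠ T.drop b := by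
    intro h
    have := congrArg List.length h
    simp at this; omega
  have conv : ∀ {c d : ℕ}, c ≠ d → c < T.length → d < T.length →
      T.drop c < T.drop d → SufLt T c d := by
    intro c d hcd hc hd hlt
    rcases lt_cases hlt with hp | ⟨j, hx, hy, heq, hlt'⟩
    · exact absurd hp (suffix_not_prefix hsent hcd hc hd)
    · refine ⟨j, by simp at hx; omega, by simp at hy; omega, ?_, ?_⟩
      · intro t ht
        have := heq t ht
        simpa using this
      · simpa using hlt'
  rcases lt_trichotomy (T.drop a) (T.drop b) with h | h | h
  · exact Or.inl (conv hab ha hb h)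
  · exact absurd h hne
  · exact Or.inr (conv (Ne.symm hab) hb ha h)


theorem ltAt_append_right {x y z : List α} (h : LtAt x y) : LtAt x (y ++ z) := by
  obtain ⟨j, hx, hy, heq, hlt⟩ := h
  refine ⟨j, hx, by simp; omega, ?_, ?_⟩
  · intro t ht
    rw [List.getElem_append_left (by omega)]
    exact heq t ht
  · rw [List.getElem_append_left hy]
    exact hlt

theorem ltAt_append_left {x y z : List α} (h : LtAt x y) : LtAt (x ++ z) y := by
  obtain ⟨j, hx, hy, heq, hlt⟩ := h
  refine ⟨j, by simp; omega, hy, ?_, ?_⟩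
  · intro t ht
    rw [List.getElem_append_left (by omega)]
    exact heq t ht
  · rw [List.getElem_append_left hx]
    exact hlt

theorem length_flatten_replicate (S : List α) (k : ℕ) :
    ((List.replicate k S).flatten).length = k * S.length := by
  induction k with
  | zero => simp
  | succ k ih => simp [List.replicate_succ, ih, Nat.succ_mul]; ring

theorem lyndon_of_suffix {w : List α} (hw : w ≠ [])
    (H : ∀ k, 0 < k → k < w.length → w < w.drop k) : IsLyndon w := by
  constructor
  · rintro ⟨S, k, hk, heq⟩
    have hS : S ≠ [] := by
      rintro rfl
      apply hw
      rw [heq]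
      simp [List.flatten_replicate_nil]
    have hSlen : 0 < S.length := List.length_pos_iff.2 hS
    have hwlen : w.length = k * S.length := by rw [heq, length_flatten_replicate]
    have hdrop : w.drop ((k-1) * S.length) = S := by
      have h1 : List.replicate k S = List.replicate (k-1) S ++ [S] := by
        rw [← List.replicate_succ']
        congr 1
        omega
      rw [heq, h1, List.flatten_append]
      have h2 : ((List.replicate (k-1) S).flatten).length = (k-1)*S.length :=
        length_flatten_replicate S (k-1)
      rw [← h2, List.drop_left]
      simp
    have hlt := H ((k-1) * S.length) (Nat.mul_pos (by omega) hSlen)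
      (by rw [hwlen]; exact (Nat.mul_lt_mul_right hSlen).2 (by omega))
    rw [hdrop] at hlt
    have hpre : S <+: w := by
      have hk1 : k = (k-1)+1 := by omega
      rw [heq, hk1, List.replicate_succ, List.flatten_cons]
      exact List.prefix_append _ _
    exact absurd (lt_of_lt_of_le hlt (prefix_le hpre)) (lt_irrefl w)
  · intro k hk0 hklen
    have hlt := H k hk0 hklen
    rw [List.rotate_eq_drop_append_take (le_of_lt hklen)]
    rcases lt_cases hlt with hp | hAt
    · have := hp.length_le
      simp at this
      omega
    · exact ltAt_lt (ltAt_append_right hAt)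

theorem lyndon_suffix {w : List α} (hly : IsLyndon w) {k : ℕ}
    (hk0 : 0 < k) (hklen : k < w.length) : w < w.drop k := by
  obtain ⟨hprim, hrot⟩ := hly
  set v := w.drop k with hv
  set u := w.take k with hu
  have hvlen : v.length = w.length - k := by simp [hv]
  have hulen : u.length = k := by simp [hu]; omega
  have hr1 : w < v ++ u := by
    have := hrot k hk0 hklen
    rwa [List.rotate_eq_drop_append_take (le_of_lt hklen)] at this
  rcases lt_trichotomy w v with h | h | h
  · exact h
  · exfalso
    have := congrArg List.length h
    omega
  · exfalso
    rcases lt_cases h with hp | hAt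
    · -- v is a prefix of w : border case
      obtain ⟨z, hz⟩ := hp
      have hzlen : z.length = k := by
        have := congrArg List.length hz
        simp at this
        omega
      have hzu : z < u := by
        have : v ++ z < v ++ u := by rw [hz]; exact hr1
        exact (append_lt_append_iff v z u).1 this
      rcases lt_cases hzu with hp' | hAt'
      · have : z = u := List.IsPrefix.eq_of_length hp' (by omega)
        rw [this] at hz
        rw [hz] at hr1
        exact lt_irrefl _ hr1
      · have h1 : z ++ v < u ++ v := ltAt_lt (ltAt_append_right (ltAt_append_left hAt'))
        have h2 : u ++ v = w := by rw [hu, hv]; exact List.take_append_drop k w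
        have h3 : w < z ++ v := by
          have hr2 := hrot (w.length - k) (by omega) (by omega)
          rw [List.rotate_eq_drop_append_take (by omega)] at hr2
          have hlv : w.length - k = v.length := by omega
          have hd : w.drop (w.length - k) = z := by
            rw [hlv, ← hz, List.drop_left]
          have ht : w.take (w.length - k) = v := by
            rw [hlv, ← hz, List.take_left]
          rwa [hd, ht] at hr2
        rw [h2] at h1
        exact lt_irrefl w (lt_trans h3 h1)
    · -- strict difference inside v
      have : v ++ u < w := ltAt_lt (ltAt_append_left hAt)
      exact lt_irrefl w (lt_trans hr1 this)


theorem sufLt_of_lt {T : List α} (hsent : Sentinel T) {a b : ℕ} (hab : a ≠ b)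
    (ha : a < T.length) (hb : b < T.length) (h : T.drop a < T.drop b) : SufLt T a b := by
  rcases lt_cases h with hp | ⟨j, hx, hy, heq, hlt'⟩
  · exact absurd hp (suffix_not_prefix hsent hab ha hb)
  · refine ⟨j, by simp at hx; omega, by simp at hy; omega, ?_, ?_⟩
    · intro t ht
      have := heq t ht
      simpa using this
    · simpa using hlt'

theorem getElem_factor (T : List α) {a m t : ℕ} (h1 : t < m) (h2 : a + t < T.length) :
    ((T.drop a).take m)[t]'(by simp; omega) = T[a+t] := by
  rw [List.getElem_take, List.getElem_drop]

theorem getElem_idx (T : List α) {a b : ℕ} (h : a = b) (ha : a < T.length) :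
    T[a]'ha = T[b]'(h ▸ ha) := by subst h; rfl

/-- Step 1: if the right-hand side holds, then `ℓ` is the greatest element of the set. -/
theorem rhs_isGreatest {T : List α} (hsent : Sentinel T) {p ℓ : ℕ}
    (hp : p + 1 < T.length) (hl1 : 1 ≤ ℓ) (hln : p + ℓ < T.length)
    (h1 : ∀ k, 1 ≤ k → k < ℓ → T.drop p < T.drop (p + k))
    (h2 : T.drop (p + ℓ) < T.drop p) :
    IsGreatest {m | m ≤ T.length - p ∧ IsLyndon ((T.drop p).take m)} ℓ := by
  set n := T.length with hn
  have hℓ : SufLt T (p + ℓ) p := sufLt_of_lt hsent (by omega) (by omega) (by omega) h2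
  constructor
  · refine ⟨by omega, ?_⟩
    set w := (T.drop p).take ℓ with hw
    have hwlen : w.length = ℓ := by simp [hw]; omega
    apply lyndon_of_suffix (by intro h; rw [h] at hwlen; simp at hwlen; omega)
    intro k hk0 hklen
    rw [hwlen] at hklen
    have hak : SufLt T p (p + k) :=
      sufLt_of_lt hsent (by omega) (by omega) (by omega) (h1 k hk0 hklen)
    obtain ⟨j, hja, hjb, heq, hlt⟩ := hak
    have hdropk : w.drop k = (T.drop (p + k)).take (ℓ - k) := by
      rw [hw, List.drop_take, List.drop_drop]
    rcases Nat.lt_or_ge j (ℓ - k) with hcase | hcase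
    · -- strict difference inside the factor
      apply ltAt_lt
      refine ⟨j, by rw [hwlen]; omega, by rw [hdropk]; simp; omega, ?_, ?_⟩
      · intro t ht
        simp only [hw, hdropk, List.getElem_take, List.getElem_drop]
        simpa only [Nat.add_assoc] using heq t ht
      · simp only [hw, hdropk, List.getElem_take, List.getElem_drop]
        simpa only [Nat.add_assoc] using hlt
    · -- agreement on the first ℓ - k symbols: contradiction chain
      exfalso
      have hs : SufLt T (p + (ℓ - k)) (p + ℓ) := by
        refine ⟨j - (ℓ - k), by omega, by omega, ?_, ?_⟩
        · intro t ht
          have e := heq (ℓ - k + t) (by omega)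
          rw [getElem_idx T (show p + (ℓ - k) + t = p + (ℓ - k + t) by omega),
            getElem_idx T (show p + ℓ + t = p + k + (ℓ - k + t) by omega)]
          exact e
        · rw [getElem_idx T (show p + (ℓ - k) + (j - (ℓ - k)) = p + j by omega),
            getElem_idx T (show p + ℓ + (j - (ℓ - k)) = p + k + j by omega)]
          exact hlt
      have c1 : T.drop (p + (ℓ - k)) < T.drop (p + ℓ) := sufLt_lt hs
      have c2 : T.drop p < T.drop (p + (ℓ - k)) := h1 (ℓ - k) (by omega) (by omega)
      exact lt_irrefl _ (lt_trans (lt_trans c2 c1) h2)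
  · -- upper bound
    rintro m ⟨hm1, hLy⟩
    by_contra hcon
    push_neg at hcon
    set w := (T.drop p).take m with hw
    have hwlen : w.length = m := by simp [hw]; omega
    have hsuf := lyndon_suffix hLy (k := ℓ) (by omega) (by omega)
    have hdropl : w.drop ℓ = (T.drop (p + ℓ)).take (m - ℓ) := by
      rw [hw, List.drop_take, List.drop_drop]
    obtain ⟨j, hja, hjb, heq, hlt⟩ := hℓ
    rcases Nat.lt_or_ge j (m - ℓ) with hcase | hcase
    · have : w.drop ℓ < w := by
        apply ltAt_lt
        refine ⟨j, by rw [hdropl]; simp; omega, by rw [hwlen]; omega, ?_, ?_⟩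
        · intro t ht
          simp only [hw, hdropl, List.getElem_take, List.getElem_drop]
          simpa only [Nat.add_assoc] using heq t ht
        · simp only [hw, hdropl, List.getElem_take, List.getElem_drop]
          simpa only [Nat.add_assoc] using hlt
      exact lt_irrefl _ (lt_trans hsuf this)
    · have hpre : w.drop ℓ = w.take (m - ℓ) := by
        rw [hdropl, hw, List.take_take, Nat.min_eq_left (by omega)]
        apply List.ext_getElem (by simp; omega)
        intro t h1' h2'
        have ht : t < m - ℓ := by simp at h1'; omega
        simp only [List.getElem_take, List.getElem_drop]
        exact heq t (by omega)
      rw [hpre] at hsuf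
      exact lt_irrefl _ (lt_of_lt_of_le hsuf (prefix_le (List.take_prefix _ _)))

/-- Step 2: existence of a length satisfying the right-hand side. -/
theorem exists_rhs {T : List α} (hsent : Sentinel T) {p : ℕ} (hp : p + 1 < T.length) :
    ∃ ℓ, 1 ≤ ℓ ∧ p + ℓ < T.length ∧
      (∀ k, 1 ≤ k → k < ℓ → T.drop p < T.drop (p + k)) ∧ T.drop (p + ℓ) < T.drop p := by
  classical
  set n := T.length with hn
  have hbase : 0 < n - 1 - p ∧ T.drop (p + (n - 1 - p)) < T.drop p := by
    constructor
    · omega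
    · apply sufLt_lt
      refine ⟨0, by omega, by omega, by omega, ?_⟩
      rw [getElem_idx T (show p + (n - 1 - p) + 0 = T.length - 1 by omega),
        getElem_idx T (show p + 0 = p by omega)]
      exact hsent p (by omega)
  have hex : ∃ k, 0 < k ∧ T.drop (p + k) < T.drop p := ⟨n - 1 - p, hbase⟩
  set ℓ := Nat.find hex with hℓdef
  obtain ⟨hℓ0, hℓlt⟩ := Nat.find_spec hex
  have hℓle : ℓ ≤ n - 1 - p := Nat.find_min' hex hbase
  refine ⟨ℓ, by omega, by omega, ?_, hℓlt⟩
  intro k hk1 hkℓ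
  have hnk : ¬ (0 < k ∧ T.drop (p + k) < T.drop p) := Nat.find_min hex hkℓ
  push_neg at hnk
  have hnk' := hnk (by omega)
  rcases suffix_trichotomy hsent (a := p) (b := p + k) (by omega) (by omega) (by omega) with h | h
  · exact sufLt_lt h
  · exact absurd (sufLt_lt h) (not_lt.2 hnk')

end Helpers

/-- For `1 ≤ i < n` and `1 ≤ ℓ ≤ n - i`, the factor `T[i, i+ℓ-1]` is the
longest Lyndon factor of `T` starting at `i` iff `T_i < T_{i+k}` for `1 ≤ k < ℓ`
and `T_i > T_{i+ℓ}`. -/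
theorem stmt0 [LinearOrder α] (T : List α) (n : ℕ) (hn : T.length = n)
    (hsent : Sentinel T) (i ℓ : ℕ) (hi1 : 1 ≤ i) (hin : i < n)
    (hl1 : 1 ≤ ℓ) (hln : ℓ ≤ n - i) :
    lyndonArray T i = ℓ ↔
      ((∀ k, 1 ≤ k → k < ℓ → T.drop (i - 1) < T.drop (i + k - 1)) ∧
        T.drop (i + ℓ - 1) < T.drop (i - 1)) := by
  subst hn
  obtain ⟨p, rfl⟩ : ∃ p, i = p + 1 := ⟨i - 1, by omega⟩
  have hp : p + 1 < T.length := hin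
  have hln' : p + ℓ < T.length := by omega
  have harr : lyndonArray T (p + 1) =
      sSup {m | m ≤ T.length - p ∧ IsLyndon ((T.drop p).take m)} := by
    simp [lyndonArray]
  have hidx : ∀ k : ℕ, p + 1 + k - 1 = p + k := fun k => by omega
  have hidx0 : p + 1 - 1 = p := by omega
  constructor
  · intro h
    obtain ⟨ℓ', h1', h2', h3', h4'⟩ := exists_rhs hsent hp
    have hg := rhs_isGreatest hsent hp h1' h2' h3' h4'
    have hsup : sSup {m | m ≤ T.length - p ∧ IsLyndon ((T.drop p).take m)} = ℓ' :=
      hg.csSup_eq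
    have hval : ℓ = ℓ' := by rw [harr, hsup] at h; omega
    subst hval
    simp only [hidx, hidx0]
    exact ⟨h3', h4'⟩
  · rintro ⟨hA, hB⟩
    simp only [hidx, hidx0] at hA hB
    have hg := rhs_isGreatest hsent hp hl1 hln' hA hB
    rw [harr, hg.csSup_eq]
end

section
/- Let T = T[1..n] be a string over a totally ordered alphabet whose last symbol T[n] occurs only at position n and is strictly smaller than every other symbol of T, and let ISA be its inverse suffix array. Then for every i with 1 ≤ i ≤ n, LA[i] = NSV_ISA[i] − i. -/
variable {α : Type*}

section MyHelpers
variable [LinearOrder α]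

theorem myNotLtNil (l : List α) : ¬ l < [] := List.not_lt_nil _

theorem myNilLt {l : List α} (h : l ≠ []) : ([] : List α) < l := by
  cases l with
  | nil => exact absurd rfl h
  | cons a t => exact List.nil_lt_cons a t

theorem myAppendLtAppend {b c : List α} (h : b < c) (a : List α) : a ++ b < a ++ c :=
  List.Lex.append_left _ h a

theorem myAppendLtIff (a b c : List α) : a ++ b < a ++ c ↔ b < c := by
  constructor
  · induction a with
    | nil => exact id
    | cons x t ih =>
      intro h
      exact ih (List.lex_cons_iff.mp h)
  · exact fun h => myAppendLtAppend h a

theorem myLtAppendAux : ∀ {a b : List α}, List.Lex (· < ·) a b → ¬ a <+: b →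
    ∀ c d : List α, a ++ c < b ++ d := by
  intro a b h
  induction h with
  | nil => intro hp; exact absurd List.nil_prefix hp
  | @cons x l₁ l₂ h2 ih =>
    intro hp c d
    have hnp : ¬ l₁ <+: l₂ := fun hq => hp (List.cons_prefix_cons.mpr ⟨rfl, hq⟩)
    exact List.Lex.cons (ih hnp c d)
  | @rel x l₁ y l₂ h2 => intro _ c d; exact List.Lex.rel h2

theorem myLtAppend {a b : List α} (h : a < b) (hp : ¬ a <+: b) (c d : List α) :
    a ++ c < b ++ d := myLtAppendAux h hp c d

theorem myPrefixLt {a b : List α} (h : a <+: b) (hne : a ≠ b) : a < b := by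
  obtain ⟨c, rfl⟩ := h
  have hc : c ≠ [] := by rintro rfl; simp at hne
  have := myAppendLtAppend (myNilLt hc) a
  simpa using this

theorem lyndon_iff_lt_drop (w : List α) (hw : w ≠ []) :
    IsLyndon w ↔ ∀ r, 0 < r → r < w.length → w < w.drop r := by
  constructor
  · rintro ⟨hprim, hrot⟩ r hr hrlen
    by_contra hcon
    set v := w.drop r with hvdef
    have hvlen : v.length = w.length - r := by rw [hvdef, List.length_drop]
    have hvne : v ≠ w := by
      intro h
      have := congrArg List.length h
      omega
    have hvw : v < w := by
      rcases lt_trichotomy w v with h | h | h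
      · exact absurd h hcon
      · exact absurd h.symm hvne
      · exact h
    have hrot1 : w < v ++ w.take r := by
      have := hrot r hr hrlen
      rwa [List.rotate_eq_drop_append_take (le_of_lt hrlen)] at this
    by_cases hp : v <+: w
    · obtain ⟨z, hz⟩ := hp
      have hzlen : z.length = r := by
        have := congrArg List.length hz
        simp at this
        omega
      have hvpos : 0 < v.length := by omega
      have hvlt : v.length < w.length := by omega
      have hrot2 : w < z ++ v := by
        have h2 := hrot v.length hvpos hvlt
        rw [List.rotate_eq_drop_append_take (le_of_lt hvlt)] at h2
        have e1 : w.drop v.length = z := by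
          conv_lhs => rw [← hz]
          exact List.drop_left
        have e2 : w.take v.length = v := by
          conv_lhs => rw [← hz]
          exact List.take_left
        rwa [e1, e2] at h2
      -- from hrot1 : w < v ++ w.take r and w = v ++ z : z < w.take r
      have hzu : z < w.take r := by
        conv at hrot1 => lhs; rw [← hz]
        exact (myAppendLtIff v z (w.take r)).mp hrot1
      have hulen : (w.take r).length = r := by
        rw [List.length_take]; omega
      have hnp : ¬ z <+: w.take r := by
        intro hpp
        have := hpp.eq_of_length (by omega)
        rw [this] at hzu
        exact lt_irrefl _ hzu
      have hfin : z ++ v < w.take r ++ v := myLtAppend hzu hnp v v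
      have huv : w.take r ++ v = w := by rw [hvdef]; exact List.take_append_drop r w
      rw [huv] at hfin
      exact absurd (hrot2.trans hfin) (lt_irrefl _)
    · have := myLtAppend hvw hp (w.take r) []
      rw [List.append_nil] at this
      exact absurd (hrot1.trans this) (lt_irrefl _)
  · intro hs
    constructor
    · rintro ⟨S, k, hk, hrep⟩
      have hS : S ≠ [] := by
        rintro rfl
        simp at hrep
        exact hw hrep
      have hSpos : 0 < S.length := List.length_pos_iff.mpr hS
      obtain ⟨m, rfl⟩ : ∃ m, k = m + 1 := ⟨k - 1, by omega⟩
      have hm : 1 ≤ m := by omega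
      set V := (List.replicate m S).flatten with hV
      have hw1 : w = S ++ V := by
        rw [hrep, List.replicate_succ, List.flatten_cons]
      have hw2 : w = V ++ S := by
        rw [hrep, hV, List.replicate_succ']
        simp
      have hVlen : V.length = m * S.length := by
        rw [hV]; simp [List.length_flatten, List.map_replicate, List.sum_replicate, smul_eq_mul]
      have hwlen : w.length = S.length + V.length := by
        rw [hw1]; simp
      have hVpos : 0 < V.length := by
        calc 0 < 1 * S.length := by omega
        _ ≤ m * S.length := Nat.mul_le_mul_right _ hm
        _ = V.length := hVlen.symm
      have hlt := hs S.length hSpos (by omega)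
      have hdrop : w.drop S.length = V := by
        rw [hw1]; exact List.drop_left
      rw [hdrop] at hlt
      have hpre : V <+: w := ⟨S, hw2.symm⟩
      have hVne : V ≠ w := by
        intro h; have := congrArg List.length h; omega
      exact absurd (hlt.trans (myPrefixLt hpre hVne)) (lt_irrefl _)
    · intro r hr hrlen
      rw [List.rotate_eq_drop_append_take (le_of_lt hrlen)]
      have hlt := hs r hr hrlen
      have hnp : ¬ w <+: w.drop r := by
        intro hp
        have := hp.length_le
        rw [List.length_drop] at this
        omega
      have := myLtAppend hlt hnp [] (w.take r)
      rwa [List.append_nil] at this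

end MyHelpers

/-- `LA[i] = NSV_ISA[i] - i` for all `1 ≤ i ≤ n`, where
`NSV_ISA[i] = min({n+1} ∪ {j | i < j ≤ n and ISA[j] < ISA[i]})`. -/
theorem stmt2 [LinearOrder α] (T : List α) (n : ℕ) (hn : T.length = n)
    (hsent : Sentinel T) (ISA : ℕ → ℕ)
    (hrange : ∀ i, 1 ≤ i → i ≤ n → 1 ≤ ISA i ∧ ISA i ≤ n)
    (hISA : ∀ i j, 1 ≤ i → i ≤ n → 1 ≤ j → j ≤ n →
      (ISA i < ISA j ↔ T.drop (i - 1) < T.drop (j - 1)))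
    (i : ℕ) (hi1 : 1 ≤ i) (hin : i ≤ n) :
    lyndonArray T i =
      sInf ({n + 1} ∪ {j | i < j ∧ j ≤ n ∧ ISA j < ISA i}) - i := by
  set Sset := ({n + 1} ∪ {j | i < j ∧ j ≤ n ∧ ISA j < ISA i} : Set ℕ) with hSset
  have hne : Sset.Nonempty := ⟨n+1, Or.inl rfl⟩
  set j := sInf Sset with hjdef
  have hjS : j ∈ Sset := Nat.sInf_mem hne
  have hij : i < j := by
    rcases hjS with h | h
    · simp only [Set.mem_singleton_iff] at h; omega
    · exact h.1
  have hjn1 : j ≤ n + 1 := by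
    rcases hjS with h | h
    · simp only [Set.mem_singleton_iff] at h; omega
    · exact le_trans h.2.1 (by omega)
  have hmin : ∀ k, i < k → k < j → T.drop (i-1) < T.drop (k-1) := by
    intro k hik hkj
    have hkn : k ≤ n := by omega
    have hkS : k ∉ Sset := Nat.notMem_of_lt_sInf hkj
    have h1 : ¬ ISA k < ISA i := fun h => hkS (Or.inr ⟨hik, hkn, h⟩)
    have hilen : (T.drop (i-1)).length = n - (i-1) := by rw [List.length_drop, hn]
    have hklen : (T.drop (k-1)).length = n - (k-1) := by rw [List.length_drop, hn]
    have hneq : T.drop (i-1) ≠ T.drop (k-1) := by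
      intro h
      rw [h, hklen] at hilen
      omega
    have h2 : ISA i ≠ ISA k := by
      intro h
      have hik' : ¬ T.drop (i-1) < T.drop (k-1) := by
        rw [← hISA i k hi1 hin (by omega) hkn]; omega
      have hki' : ¬ T.drop (k-1) < T.drop (i-1) := by
        rw [← hISA k i (by omega) hkn hi1 hin]; omega
      rcases lt_trichotomy (T.drop (i-1)) (T.drop (k-1)) with h'|h'|h'
      · exact hik' h'
      · exact hneq h'
      · exact hki' h'
    exact (hISA i k hi1 hin (by omega) hkn).mp (by omega)
  have hjlt : j ≤ n → T.drop (j-1) < T.drop (i-1) := by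
    intro hjn
    rcases hjS with h | h
    · simp only [Set.mem_singleton_iff] at h; omega
    · exact (hISA j i (by omega) hjn hi1 hin).mp h.2.2
  have hmem : (j - i) ∈ {ℓ | ℓ ≤ T.length - (i-1) ∧ IsLyndon ((T.drop (i-1)).take ℓ)} := by
    refine ⟨by rw [hn]; omega, ?_⟩
    set w := (T.drop (i-1)).take (j-i) with hwdef
    have hwlen : w.length = j - i := by
      rw [hwdef, List.length_take, List.length_drop, hn]
      omega
    have hwne : w ≠ [] := by
      intro h; rw [h] at hwlen; simp at hwlen; omega
    rw [lyndon_iff_lt_drop w hwne]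
    intro r hr hrlen
    rw [hwlen] at hrlen
    have harith : (i - 1) + (j - i) = j - 1 := by omega
    have hdecomp : T.drop (i-1) = w ++ T.drop (j-1) := by
      rw [hwdef, ← harith, ← List.drop_drop, List.take_append_drop]
    have h1 : T.drop (i-1) < T.drop (i+r-1) := hmin (i+r) (by omega) (by omega)
    have hdropk : T.drop (i+r-1) = w.drop r ++ T.drop (j-1) := by
      have e : T.drop (i+r-1) = (T.drop (i-1)).drop r := by
        rw [List.drop_drop]
        congr 1
        omega
      rw [e, hdecomp, List.drop_append_of_le_length (by omega)]
    rw [hdecomp, hdropk] at h1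
    set v := w.drop r with hvdef
    have hvlen : v.length = j - i - r := by rw [hvdef, List.length_drop, hwlen]
    by_contra hcon
    have hvne : v ≠ w := by
      intro h
      have := congrArg List.length h
      omega
    have hvw : v < w := by
      rcases lt_trichotomy w v with h | h | h
      · exact absurd h hcon
      · exact absurd h.symm hvne
      · exact h
    by_cases hp : v <+: w
    · obtain ⟨z, hz⟩ := hp
      conv at h1 => lhs; rw [← hz]
      rw [List.append_assoc] at h1
      have h2 : z ++ T.drop (j-1) < T.drop (j-1) :=
        (myAppendLtIff v _ _).mp h1
      have hzs : z ++ T.drop (j-1) = T.drop (j-r-1) := by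
        have e : T.drop (i-1) = v ++ (z ++ T.drop (j-1)) := by
          rw [hdecomp, ← hz, List.append_assoc]
        have e2 : (T.drop (i-1)).drop v.length = z ++ T.drop (j-1) := by
          rw [e, List.drop_left]
        rw [← e2, List.drop_drop]
        congr 1
        omega
      rw [hzs] at h2
      by_cases hjn : j ≤ n
      · have ha : T.drop (i-1) < T.drop (j-r-1) := by
          exact hmin (j-r) (by omega) (by omega)
        exact absurd ((ha.trans h2).trans (hjlt hjn)) (lt_irrefl _)
      · have hjn' : j = n + 1 := by omega
        have : T.drop (j-1) = [] := List.drop_eq_nil_of_le (by omega)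
        rw [this] at h2
        exact myNotLtNil _ h2
    · have := myLtAppend hvw hp (T.drop (j-1)) (T.drop (j-1))
      exact absurd (h1.trans this) (lt_irrefl _)
  have hub : ∀ ℓ ∈ {ℓ | ℓ ≤ T.length - (i-1) ∧ IsLyndon ((T.drop (i-1)).take ℓ)},
      ℓ ≤ j - i := by
    rintro ℓ ⟨hb, hL⟩
    rw [hn] at hb
    by_contra hcon
    push_neg at hcon
    have hjn : j ≤ n := by omega
    set w := (T.drop (i-1)).take ℓ with hw
    have hwlen : w.length = ℓ := by
      rw [hw, List.length_take, List.length_drop, hn]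
      omega
    have hwne : w ≠ [] := by
      intro h; rw [h] at hwlen; simp at hwlen; omega
    have hlt := (lyndon_iff_lt_drop w hwne).mp hL (j-i) (by omega) (by omega)
    have hdecomp : T.drop (i-1) = w ++ T.drop (i-1+ℓ) := by
      rw [hw, ← List.drop_drop, List.take_append_drop]
    have hdropj : T.drop (j-1) = w.drop (j-i) ++ T.drop (i-1+ℓ) := by
      have e : T.drop (j-1) = (T.drop (i-1)).drop (j-i) := by
        rw [List.drop_drop]
        congr 1
        omega
      rw [e, hdecomp, List.drop_append_of_le_length (by omega)]
    have hb2 := hjlt hjn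
    rw [hdecomp, hdropj] at hb2
    have hnp : ¬ w <+: w.drop (j-i) := by
      intro hp
      have := hp.length_le
      rw [List.length_drop] at this
      omega
    have := myLtAppend hlt hnp (T.drop (i-1+ℓ)) (T.drop (i-1+ℓ))
    exact absurd (this.trans hb2) (lt_irrefl _)
  have hbdd : BddAbove {ℓ | ℓ ≤ T.length - (i-1) ∧ IsLyndon ((T.drop (i-1)).take ℓ)} :=
    ⟨T.length, fun x hx => le_trans hx.1 (Nat.sub_le _ _)⟩
  unfold lyndonArray
  exact le_antisymm (csSup_le ⟨j - i, hmem⟩ hub) (le_csSup hbdd hmem)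
end

section
/- Let T = T[1..n] be a string over a totally ordered alphabet whose last symbol T[n] occurs only at position n and is strictly smaller than every other symbol of T. Then for every i with 1 ≤ i < n, LA[i] equals the smallest integer ℓ ≥ 1 such that i + ℓ ≤ n and T_{i+ℓ} < T_i; that is, the length of the longest Lyndon factor starting at i equals the distance from i to the next position (in text order) whose suffix is lexicographically smaller than T_i. -/
variable {α : Type*}

section MyAux

variable [LinearOrder α]

lemma my_lex_mismatch (pre : List α) {a b : α} (hab : a < b) (s₁ s₂ : List α) :
    pre ++ a :: s₁ < pre ++ b :: s₂ :=
  show List.Lex (· < ·) _ _ from List.Lex.append_left _ (List.Lex.rel hab) pre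

lemma my_lt_of_prefix {l₁ l₂ : List α} (h : l₁ <+: l₂) (hne : l₁ ≠ l₂) : l₁ < l₂ := by
  obtain ⟨t, rfl⟩ := h
  show List.Lex (· < ·) _ _
  cases t with
  | nil => simp at hne
  | cons c cs =>
    clear hne
    induction l₁ with
    | nil => exact List.Lex.nil
    | cons x xs ih => exact List.Lex.cons ih

lemma my_mismatch_of_lt {l₁ l₂ : List α} (h : l₁ < l₂) :
    l₁ <+: l₂ ∨ ∃ (pre s₁ s₂ : List α) (a b : α),
      a < b ∧ l₁ = pre ++ a :: s₁ ∧ l₂ = pre ++ b :: s₂ := by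
  have h' : List.Lex (· < ·) l₁ l₂ := h
  clear h
  induction h' with
  | nil => left; exact List.nil_prefix
  | @cons a l₁' l₂' h'' ih =>
    rcases ih with ⟨t, rfl⟩ | ⟨pre, s₁, s₂, x, y, hxy, rfl, rfl⟩
    · left; exact ⟨t, rfl⟩
    · right; exact ⟨a :: pre, s₁, s₂, x, y, hxy, rfl, rfl⟩
  | @rel a l₁' b l₂' hab =>
    right; exact ⟨[], l₁', l₂', a, b, hab, rfl, rfl⟩

lemma my_lt_of_append_lt {p x y : List α} (h : p ++ x < p ++ y) : x < y := by
  induction p with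
  | nil => exact h
  | cons c cs ih =>
    have h' : List.Lex (· < ·) (c :: (cs ++ x)) (c :: (cs ++ y)) := h
    cases h' with
    | cons h'' => exact ih h''
    | rel h'' => exact absurd h'' (lt_irrefl c)

lemma my_append_lt_append {x y : List α} (h : x < y) (hlen : y.length ≤ x.length)
    (p q : List α) : x ++ p < y ++ q := by
  rcases my_mismatch_of_lt h with hp | ⟨pre, s₁, s₂, a, b, hab, rfl, rfl⟩
  · have h1 := hp.length_le
    have hxy : x = y := hp.eq_of_length (le_antisymm h1 hlen)
    exact absurd (hxy ▸ h) (lt_irrefl y)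
  · simp only [List.append_assoc, List.cons_append]
    exact my_lex_mismatch pre hab _ _

lemma my_take_append_cons {pre s : List α} (c : α) {k : ℕ} (h : pre.length < k) :
    (pre ++ c :: s).take k = pre ++ c :: s.take (k - pre.length - 1) := by
  rw [List.take_append, List.take_of_length_le (le_of_lt h)]
  congr 1
  have hk : k - pre.length = (k - pre.length - 1) + 1 := by omega
  conv_lhs => rw [hk]
  rw [List.take_succ_cons]

lemma my_take_lt_take {pre s₁ s₂ : List α} {a b : α} (hab : a < b) {k₁ k₂ : ℕ}
    (h₁ : pre.length < k₁) (h₂ : pre.length < k₂) :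
    (pre ++ a :: s₁).take k₁ < (pre ++ b :: s₂).take k₂ := by
  rw [my_take_append_cons a h₁, my_take_append_cons b h₂]
  exact my_lex_mismatch pre hab _ _

lemma my_drop_append_cons {pre s : List α} (c : α) {k : ℕ} (h : k ≤ pre.length) :
    (pre ++ c :: s).drop k = pre.drop k ++ c :: s := by
  rw [List.drop_append, Nat.sub_eq_zero_of_le h, List.drop_zero]

lemma my_len_flatten_replicate (k : ℕ) (S : List α) :
    ((List.replicate k S).flatten).length = k * S.length := by
  induction k with
  | zero => simp
  | succ k ih => simp [List.replicate_succ, ih, Nat.succ_mul]; ring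

end MyAux

section MyMain

variable [LinearOrder α]

lemma my_getElem_congr {l : List α} {p q : ℕ} (h : p = q) (hp : p < l.length) :
    l[p]'hp = l[q]'(h ▸ hp) := by subst h; rfl

lemma my_sentinel_no_prefix (T : List α) (hsent : Sentinel T) (p q : ℕ)
    (hq : 0 < q) (hpq : p + q < T.length) : ¬ (T.drop (p + q) <+: T.drop p) := by
  intro hp
  have hk : T.length - (p + q) - 1 < (T.drop (p + q)).length := by
    rw [List.length_drop]; omega
  have e1 := hp.getElem hk
  rw [List.getElem_drop, List.getElem_drop] at e1
  have h1 : p + q + (T.length - (p + q) - 1) = T.length - 1 := by omega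
  have h2 : p + (T.length - (p + q) - 1) + 1 < T.length := by omega
  have hlt := hsent (p + (T.length - (p + q) - 1)) h2
  have e2 : T[p + q + (T.length - (p + q) - 1)]'(by omega) = T[T.length - 1]'(by omega) :=
    my_getElem_congr h1 _
  have e3 : T[T.length - 1]'(by omega) = T[p + (T.length - (p + q) - 1)]'(by omega) :=
    e2.symm.trans e1
  rw [← e3] at hlt
  exact lt_irrefl _ hlt

lemma my_claimA (u : List α) (m : ℕ) (hm1 : 0 < m) (hmu : m < u.length)
    (hmin : ∀ t, 0 < t → t < m → ¬ (u.drop t < u)) (hm3 : u.drop m < u) :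
    IsLyndon (u.take m) := by
  have hwlen : (u.take m).length = m := by rw [List.length_take]; omega
  have hps : ∀ t, 0 < t → t < m → u.take m < (u.take m).drop t := by
    intro t ht htm
    have hne : u ≠ u.drop t := by
      intro h
      have h9 := congrArg List.length h
      rw [List.length_drop] at h9
      omega
    have h1 : u < u.drop t := by
      rcases lt_trichotomy u (u.drop t) with h | h | h
      · exact h
      · exact absurd h hne
      · exact absurd h (hmin t ht htm)
    rcases my_mismatch_of_lt h1 with hp | ⟨pre, s₁, s₂, a, b, hab, he1, he2⟩
    · have h9 := hp.length_le
      rw [List.length_drop] at h9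
      omega
    · by_cases hj : pre.length < m - t
      · rw [List.drop_take, he2, he1]
        exact my_take_lt_take hab (by omega) hj
      · exfalso
        have e1 : u.drop (m - t) = pre.drop (m - t) ++ a :: s₁ := by
          rw [he1]; exact my_drop_append_cons a (by omega)
        have e2 : u.drop m = pre.drop (m - t) ++ b :: s₂ := by
          have h2 : u.drop m = (u.drop t).drop (m - t) := by
            rw [List.drop_drop]; congr 1; omega
          rw [h2, he2]; exact my_drop_append_cons b (by omega)
        have h2 : u.drop (m - t) < u.drop m := by
          rw [e1, e2]; exact my_lex_mismatch _ hab _ _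
        exact hmin (m - t) (by omega) (by omega) (lt_trans h2 hm3)
  constructor
  · rintro ⟨S, k, hk, hrep⟩
    have hSl : (u.take m).length = k * S.length := by
      rw [hrep, my_len_flatten_replicate]
    have hm' : m = k * S.length := hwlen.symm.trans hSl
    have hS0 : S ≠ [] := by
      intro h; rw [h] at hm'; simp at hm'; omega
    have hS0' : 0 < S.length := List.length_pos_iff.mpr hS0
    have htm : S.length < m := by
      calc S.length < 2 * S.length := by omega
        _ ≤ k * S.length := Nat.mul_le_mul_right _ hk
        _ = m := hm'.symm
    have hsuf : (u.take m).drop S.length = (List.replicate (k - 1) S).flatten := by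
      rw [hrep]
      have h4 : List.replicate k S = S :: List.replicate (k - 1) S := by
        rw [← List.replicate_succ]; congr 1; omega
      rw [h4, List.flatten_cons, List.drop_left]
    have h5 : m - S.length = ((List.replicate (k - 1) S).flatten).length := by
      rw [my_len_flatten_replicate, Nat.sub_mul, one_mul, ← hm']
    have hpref : (u.take m).take (m - S.length) = (List.replicate (k - 1) S).flatten := by
      rw [hrep]
      have h4 : List.replicate k S = List.replicate (k - 1) S ++ [S] := by
        rw [← List.replicate_succ']; congr 1; omega
      rw [h4, List.flatten_append, h5]
      exact List.take_left
    have h6 : (u.take m).drop S.length < u.take m := by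
      rw [hsuf, ← hpref]
      refine my_lt_of_prefix (List.take_prefix _ _) ?_
      intro h7
      have h8 := congrArg List.length h7
      rw [List.length_take, hwlen] at h8
      omega
    exact (lt_asymm (hps S.length hS0' htm)) h6
  · intro r hr0 hrm
    rw [hwlen] at hrm
    rw [List.rotate_eq_drop_append_take (by rw [hwlen]; omega)]
    have h1 := hps r hr0 hrm
    have h2 := my_append_lt_append h1
      (by rw [List.length_drop]; exact Nat.sub_le _ _) [] ((u.take m).take r)
    rwa [List.append_nil] at h2

lemma my_claimB (u : List α) (m ℓ : ℕ) (hm1 : 0 < m) (hmℓ : m < ℓ) (hℓu : ℓ ≤ u.length)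
    (hm3 : u.drop m < u) (hnpre : ¬ u.drop m <+: u) : ¬ IsLyndon (u.take ℓ) := by
  rintro ⟨-, hrot⟩
  have hwlen : (u.take ℓ).length = ℓ := by rw [List.length_take]; omega
  rcases my_mismatch_of_lt hm3 with hp | ⟨pre, s₁, s₂, a, b, hab, he1, he2⟩
  · exact hnpre hp
  have hrm := hrot m hm1 (by rw [hwlen]; omega)
  rw [List.rotate_eq_drop_append_take (by rw [hwlen]; omega)] at hrm
  have hdt : (u.take ℓ).drop m = (u.drop m).take (ℓ - m) := List.drop_take
  by_cases hj : pre.length < ℓ - m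
  · have h1 : (u.take ℓ).drop m ++ (u.take ℓ).take m < u.take ℓ := by
      rw [hdt, he1, my_take_append_cons a hj]
      conv_rhs => rw [he2, my_take_append_cons b (by omega : pre.length < ℓ)]
      rw [List.append_assoc, List.cons_append]
      exact my_lex_mismatch pre hab _ _
    exact lt_asymm hrm h1
  · have hagree : (u.drop m).take (ℓ - m) = u.take (ℓ - m) := by
      rw [he1, he2, List.take_append_of_le_length (by omega),
        List.take_append_of_le_length (by omega)]
    have hdp : (u.take ℓ).drop m = (u.take ℓ).take (ℓ - m) := by
      rw [hdt, hagree, List.take_take]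
      congr 1
      omega
    have hxy : (u.take ℓ).drop (ℓ - m) < (u.take ℓ).take m := by
      have h2 : (u.take ℓ).take (ℓ - m) ++ (u.take ℓ).drop (ℓ - m) <
          (u.take ℓ).take (ℓ - m) ++ (u.take ℓ).take m := by
        rw [List.take_append_drop, ← hdp]
        exact hrm
      exact my_lt_of_append_lt h2
    have hrm2 := hrot (ℓ - m) (by omega) (by rw [hwlen]; omega)
    rw [List.rotate_eq_drop_append_take (by rw [hwlen]; omega)] at hrm2
    have h3 : (u.take ℓ).take m ++ (u.take ℓ).take (ℓ - m) <
        (u.take ℓ).drop (ℓ - m) ++ (u.take ℓ).take (ℓ - m) := by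
      have h4 : u.take ℓ = (u.take ℓ).take m ++ (u.take ℓ).take (ℓ - m) := by
        conv_lhs => rw [← List.take_append_drop m (u.take ℓ)]
        rw [hdp]
      rw [← h4]
      exact hrm2
    have h5 : (u.take ℓ).drop (ℓ - m) ++ (u.take ℓ).take (ℓ - m) <
        (u.take ℓ).take m ++ (u.take ℓ).take (ℓ - m) :=
      my_append_lt_append hxy
        (by rw [List.length_take, List.length_drop, hwlen]; omega) _ _
    exact lt_asymm h3 h5

end MyMain

/-- For `1 ≤ i < n`, `LA[i]` is the smallest `ℓ ≥ 1` such that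
`i + ℓ ≤ n` and `T_{i+ℓ} < T_i`. -/
theorem stmt3 [LinearOrder α] (T : List α) (n : ℕ) (hn : T.length = n)
    (hsent : Sentinel T) (i : ℕ) (hi1 : 1 ≤ i) (hin : i < n) :
    IsLeast {ℓ | 1 ≤ ℓ ∧ i + ℓ ≤ n ∧ T.drop (i + ℓ - 1) < T.drop (i - 1)}
      (lyndonArray T i) := by
  subst hn
  classical
  have hex : ∃ ℓ, 1 ≤ ℓ ∧ i + ℓ ≤ T.length ∧ T.drop (i + ℓ - 1) < T.drop (i - 1) := by
    refine ⟨T.length - i, by omega, by omega, ?_⟩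
    have h1 : i + (T.length - i) - 1 = T.length - 1 := by omega
    rw [h1]
    have h2 : T.length - 1 < T.length := by omega
    have h3 : i - 1 < T.length := by omega
    rw [List.drop_eq_getElem_cons h2, List.drop_eq_getElem_cons h3]
    have h4 : T.length - 1 + 1 = T.length := by omega
    rw [h4, List.drop_length]
    have h5 := hsent (i - 1) (by omega)
    simpa using my_lex_mismatch [] h5 [] (T.drop (i - 1 + 1))
  set m := Nat.find hex with hmdef
  obtain ⟨hm1, hm2, hm3T⟩ := Nat.find_spec hex
  set u := T.drop (i - 1) with hudef
  have hulen : u.length = T.length - (i - 1) := List.length_drop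
  have hdropeq : ∀ ℓ : ℕ, T.drop (i + ℓ - 1) = u.drop ℓ := by
    intro ℓ
    rw [hudef, List.drop_drop]
    congr 1
    omega
  have hm3 : u.drop m < u := by rw [← hdropeq]; exact hm3T
  have hmin : ∀ t, 0 < t → t < m → ¬ (u.drop t < u) := by
    intro t ht htm hlt
    exact Nat.find_min hex htm ⟨ht, by omega, by rw [hdropeq]; exact hlt⟩
  have hmu : m < u.length := by omega
  have hnpre : ¬ u.drop m <+: u := by
    have hdm : u.drop m = T.drop ((i - 1) + m) := by rw [hudef, List.drop_drop]
    rw [hdm, hudef]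
    exact my_sentinel_no_prefix T hsent (i - 1) m hm1 (by omega)
  have hLyndon : IsLyndon (u.take m) := my_claimA u m hm1 hmu hmin hm3
  have hgreat : IsGreatest {ℓ | ℓ ≤ T.length - (i - 1) ∧ IsLyndon (u.take ℓ)} m := by
    constructor
    · exact ⟨by omega, hLyndon⟩
    · intro ℓ hℓ
      obtain ⟨ha, hb⟩ := hℓ
      by_contra hc
      push_neg at hc
      exact my_claimB u m ℓ hm1 hc (by omega) hm3 hnpre hb
  have hLA : lyndonArray T i = m := by
    unfold lyndonArray
    simp only [← hudef]
    exact hgreat.csSup_eq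
  rw [hLA]
  exact ⟨⟨hm1, hm2, hm3T⟩, fun ℓ hℓ => Nat.find_min' hex hℓ⟩
end

section
/- Let T = T[1..n] be a string over a totally ordered alphabet whose last symbol T[n] occurs only at position n and is strictly smaller than every other symbol of T. If i and j are positions with 1 ≤ i, j ≤ n such that T[i] = T[j], the suffix T_i is L-type, and the suffix T_j is S-type, then T_i < T_j. That is, within the bucket of suffixes starting with the same symbol, every L-type suffix is lexicographically smaller than every S-type suffix. -/
variable {α : Type*}

private theorem cons_lt_cons_iff' [LinearOrder α] {a : α} {l₁ l₂ : List α} :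
    (a :: l₁ : List α) < a :: l₂ ↔ l₁ < l₂ := List.cons_lt_cons_self

theorem aux9 [LinearOrder α] (T : List α) (hsent : Sentinel T)
    (i j : ℕ) (hi1 : 1 ≤ i) (hin : i ≤ T.length) (hj1 : 1 ≤ j) (hjn : j ≤ T.length)
    (heq : T[i-1]'(by omega) = T[j-1]'(by omega))
    (hL : LType T i) (hS : SType T j) : T.drop (i-1) < T.drop (j-1) := by
  have hiltn : i < T.length := hL.1
  have hjltn : j < T.length := by
    rcases lt_or_eq_of_le hjn with h | h
    · exact h
    · exfalso
      have hs := hsent (i-1) (by omega)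
      have he : T[T.length - 1]'(by omega) = T[i-1]'(by omega) := by
        rw [heq]; congr 1; omega
      rw [he] at hs; exact lt_irrefl _ hs
  have hij : i ≠ j := by
    rintro rfl
    rcases hS with h | h
    · omega
    · exact lt_asymm hL.2 h
  rcases lt_trichotomy (T.drop (i-1)) (T.drop (j-1)) with h | h | h
  · exact h
  · exfalso
    have := congrArg List.length h
    simp [List.length_drop] at this
    omega
  · exfalso
    have hdi1 : T.drop (i-1) = T[i-1]'(by omega) :: T.drop i := by
      conv_lhs => rw [List.drop_eq_getElem_cons (show i-1 < T.length by omega)]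
      rw [Nat.sub_add_cancel hi1]
    have hdj1 : T.drop (j-1) = T[j-1]'(by omega) :: T.drop j := by
      conv_lhs => rw [List.drop_eq_getElem_cons (show j-1 < T.length by omega)]
      rw [Nat.sub_add_cancel hj1]
    have hdi : T.drop i = T[i] :: T.drop (i+1) := List.drop_eq_getElem_cons hiltn
    have hdj : T.drop j = T[j] :: T.drop (j+1) := List.drop_eq_getElem_cons hjltn
    have hS' : T.drop (j-1) < T.drop j := by
      rcases hS with h' | h'
      · omega
      · exact h'
    have h1 : T.drop j < T.drop i := by
      rw [hdi1, hdj1, heq] at h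
      exact cons_lt_cons_iff'.mp h
    have hTi_le : T[i] ≤ T[i-1]'(by omega) := by
      have hh := hL.2
      rw [hdi1, hdi] at hh
      exact List.head_le_of_lt hh
    have hle_Tj : T[j-1]'(by omega) ≤ T[j] := by
      have hh := hS'
      rw [hdj1, hdj] at hh
      exact List.head_le_of_lt hh
    have hTj_le_Ti : T[j] ≤ T[i] := by
      have hh := h1
      rw [hdi, hdj] at hh
      exact List.head_le_of_lt hh
    have hTi : T[i] = T[i-1]'(by omega) :=
      le_antisymm hTi_le (by rw [heq]; exact le_trans hle_Tj hTj_le_Ti)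
    have hTj : T[j] = T[i-1]'(by omega) :=
      le_antisymm (le_trans hTj_le_Ti hTi_le) (by rw [heq]; exact hle_Tj)
    have hi1n : i + 1 < T.length := by
      rcases lt_or_eq_of_le (by omega : i + 1 ≤ T.length) with h' | h'
      · exact h'
      · exfalso
        have hs := hsent (i-1) (by omega)
        have hlast : T[T.length - 1]'(by omega) = T[i]'hiltn := by congr 1; omega
        rw [hlast, hTi] at hs
        exact lt_irrefl _ hs
    have hL' : LType T (i+1) := by
      refine ⟨hi1n, ?_⟩
      have hh := hL.2
      rw [hdi1, ← hTi, hdi] at hh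
      have hh2 := cons_lt_cons_iff'.mp hh
      rw [← hdi] at hh2
      simpa using hh2
    have hS'' : SType T (j+1) := by
      refine Or.inr ?_
      have hh := hS'
      rw [hdj1, show T[j-1]'(by omega) = T[j]'hjltn from (hTj.trans heq).symm] at hh
      rw [hdj] at hh
      have hh2 := cons_lt_cons_iff'.mp hh
      rw [← hdj] at hh2
      simpa using hh2
    have h2 := aux9 T hsent (i+1) (j+1) (by omega) (by omega) (by omega) (by omega)
      (by simp only [Nat.add_sub_cancel]; rw [hTi, hTj]) hL' hS''
    simp only [Nat.add_sub_cancel] at h2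
    exact lt_asymm h1 h2
termination_by T.length - i

/-- Within a bucket of suffixes starting with the same symbol, every
L-type suffix is lexicographically smaller than every S-type suffix. -/
theorem stmt9 [LinearOrder α] (T : List α) (n : ℕ) (hn : T.length = n)
    (hsent : Sentinel T) (i j : ℕ) (hi1 : 1 ≤ i) (hin : i ≤ n)
    (hj1 : 1 ≤ j) (hjn : j ≤ n)
    (heq : T[i - 1]'(by omega) = T[j - 1]'(by omega))
    (hL : LType T i) (hS : SType T j) :
    T.drop (i - 1) < T.drop (j - 1) := by
  subst hn
  exact aux9 T hsent i j hi1 hin hj1 hjn heq hL hS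
end

section
/- Let T = T[1..n] be a string over a totally ordered alphabet. No two consecutive positions of T are both LMS-type; consequently, the number of LMS-type positions in T is at most ⌈n/2⌉, and hence the string T^1 obtained by replacing consecutive LMS-factors by their lexicographic names has length at most n/2 (rounded up). -/
variable {α : Type*}

/-- No two consecutive positions of `T` are both LMS-type; consequently
the number of LMS-type positions is at most `⌈n/2⌉`. -/
theorem stmt10 [LinearOrder α] (T : List α) (n : ℕ) (hn : T.length = n) :
    (∀ i, ¬ (LMSType T i ∧ LMSType T (i + 1))) ∧
      {i | LMSType T i}.ncard ≤ (n + 1) / 2 := by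
  have hpart1 : ∀ i, ¬ (LMSType T i ∧ LMSType T (i + 1)) := by
    rintro i ⟨⟨h2, hle, hS, hL⟩, ⟨h2', hle', hS', hL'⟩⟩
    have h1 : i + 1 - 1 = i := rfl
    rw [h1] at hL'
    obtain ⟨hilt, hlt⟩ := hL'
    rcases hS with h | h
    · omega
    · exact absurd h (not_lt.2 hlt.le)
  refine ⟨hpart1, ?_⟩
  have hsub : {i | LMSType T i} ⊆ Set.Icc 2 n := fun i hi => ⟨hi.1, hn ▸ hi.2.1⟩
  have hinj : Set.InjOn (· / 2) {i | LMSType T i} := by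
    intro i hi j hj hij
    by_contra hne
    simp only at hij
    rcases Nat.lt_or_ge i j with h | h
    · have hj' : j = i + 1 := by omega
      exact hpart1 i ⟨hi, hj' ▸ hj⟩
    · have hi' : i = j + 1 := by omega
      exact hpart1 j ⟨hj, hi' ▸ hi⟩
  have himg : (· / 2) '' {i | LMSType T i} ⊆ (Finset.Icc 1 (n / 2) : Set ℕ) := by
    rintro x ⟨i, hi, rfl⟩
    have h1 := hsub hi
    simp only [Set.mem_Icc] at h1
    simp only [Finset.coe_Icc, Set.mem_Icc]
    omega
  calc {i | LMSType T i}.ncard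
      = ((· / 2) '' {i | LMSType T i}).ncard := (Set.ncard_image_of_injOn hinj).symm
    _ ≤ ((Finset.Icc 1 (n / 2) : Finset ℕ) : Set ℕ).ncard :=
        Set.ncard_le_ncard himg (Finset.Icc _ _).finite_toSet
    _ = (Finset.Icc 1 (n / 2)).card := Set.ncard_coe_finset _
    _ ≤ (n + 1) / 2 := by rw [Nat.card_Icc]; omega
end
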